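/- Let u_ε ∈ C^∞(𝕋^d) with ∫_{𝕋^d} u_ε dx = 0 minimize the functional I_ε[u] = ∫_{𝕋^d} e^{|P+∇u(x)|²/2 + V(x,x/ε)} dx over {u ∈ C^1(𝕋^d) : ∫_{𝕋^d} u dx = 0}, and set H̄_ε(P) = ln I_ε[u_ε]. Then inf_{(x,y)∈𝕋^d×𝒴^d} V(x,y) ≤ H̄_ε(P) ≤ |P|²/2 + sup_{(x,y)∈𝕋^d×𝒴^d} V(x,y), and moreover ∫_{𝕋^d} |∇u_ε(x)|² dx ≤ 2( sup_{(x,y)} V(x,y) − inf_{(x,y)} V(x,y) ). -/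

import Mathlib

open MeasureTheory Filter Topology Function

noncomputable section

/-- The unit cell `𝒴^d = [0,1)^d`. -/
def cube (d : ℕ) : Set (Fin d → ℝ) := Set.univ.pi fun _ => Set.Ico (0 : ℝ) 1

/-- `ℤ^d`-periodicity of a function on `ℝ^d`; functions on the torus `𝕋^d`
(and `𝒴^d`-periodic functions) are identified with such functions. -/
def ZPer {d : ℕ} (f : (Fin d → ℝ) → ℝ) : Prop :=
  ∀ (x : Fin d → ℝ) (k : Fin d → ℤ), f (fun i => x i + (k i : ℝ)) = f x

/-- The `i`-th partial derivative. -/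
def pder {d : ℕ} (i : Fin d) (f : (Fin d → ℝ) → ℝ) (x : Fin d → ℝ) : ℝ :=
  fderiv ℝ f x (Pi.single i 1)

/-- `V : 𝕋^d × ℝ^d → ℝ` smooth, `𝒴^d`-periodic in the second variable
(and periodic in the first, i.e. defined on the torus). -/
def SmoothV {d : ℕ} (V : (Fin d → ℝ) → (Fin d → ℝ) → ℝ) : Prop :=
  ContDiff ℝ (⊤ : ℕ∞) (uncurry V) ∧ (∀ y, ZPer fun x => V x y) ∧ (∀ x, ZPer (V x))

/-- `sup_{(x,y) ∈ 𝕋^d × 𝒴^d} V (x,y)` (by periodicity, the sup over all of `ℝ^d × ℝ^d`). -/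
def supV {d : ℕ} (V : (Fin d → ℝ) → (Fin d → ℝ) → ℝ) : ℝ :=
  ⨆ q : (Fin d → ℝ) × (Fin d → ℝ), V q.1 q.2

/-- `inf_{(x,y) ∈ 𝕋^d × 𝒴^d} V (x,y)`. -/
def infV {d : ℕ} (V : (Fin d → ℝ) → (Fin d → ℝ) → ℝ) : ℝ :=
  ⨅ q : (Fin d → ℝ) × (Fin d → ℝ), V q.1 q.2

/-- The functional `I_ε[u] = ∫_{𝕋^d} e^{|P+∇u(x)|²/2 + V(x,x/ε)} dx`. -/
def Ieps {d : ℕ} (P : Fin d → ℝ) (V : (Fin d → ℝ) → (Fin d → ℝ) → ℝ) (ε : ℝ)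
    (u : (Fin d → ℝ) → ℝ) : ℝ :=
  ∫ x in cube d, Real.exp ((∑ i, (P i + pder i u x) ^ 2) / 2 + V x (ε⁻¹ • x))

/- ### Auxiliary lemmas -/

lemma cube_subset_Icc {d : ℕ} : cube d ⊆ Set.Icc (0 : Fin d → ℝ) 1 := by
  rw [← Set.pi_univ_Icc]
  exact Set.pi_mono fun i _ => by simpa using Set.Ico_subset_Icc_self

lemma integrableOn_cube {d : ℕ} {f : (Fin d → ℝ) → ℝ} (hf : Continuous f) :
    IntegrableOn f (cube d) :=
  (hf.continuousOn.integrableOn_compact isCompact_Icc).mono_set cube_subset_Icc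

lemma measurableSet_cube {d : ℕ} : MeasurableSet (cube d) :=
  MeasurableSet.univ_pi fun _ => measurableSet_Ico

lemma volume_cube {d : ℕ} : volume (cube d) = 1 := by
  rw [cube, volume_pi_pi]
  simp [Real.volume_Ico]

lemma setIntegral_const_cube {d : ℕ} (c : ℝ) : (∫ _x in cube d, c) = c := by
  rw [setIntegral_const, measureReal_def, volume_cube]; simp

lemma continuous_pder {d : ℕ} (i : Fin d) {u : (Fin d → ℝ) → ℝ} (hu : ContDiff ℝ (⊤ : ℕ∞) u) :
    Continuous (pder i u) :=
  (hu.continuous_fderiv (by simp)).clm_apply continuous_const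

lemma sum_divg {n : ℕ} (i : Fin (n+1)) (u : (Fin (n+1) → ℝ) → ℝ) :
    (fun x : Fin (n+1) → ℝ =>
      ∑ j, (if j = i then fderiv ℝ u x else 0) (Pi.single j 1)) = pder i u := by
  funext x
  rw [Finset.sum_eq_single i]
  · simp [pder]
  · intro j _ hj; simp [hj]
  · simp

lemma integral_pder {d : ℕ} (i : Fin d) {u : (Fin d → ℝ) → ℝ} (hu : ContDiff ℝ (⊤ : ℕ∞) u)
    (hper : ZPer u) : (∫ x in cube d, pder i u x) = 0 := by
  cases d with
  | zero => exact i.elim0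
  | succ n =>
    have hdvg := integral_divergence_of_hasFDerivAt_off_countable'
      (0 : Fin (n+1) → ℝ) 1 zero_le_one
      (fun j => if j = i then u else 0)
      (fun j x => if j = i then fderiv ℝ u x else 0) ∅ Set.countable_empty
      (fun j => by
        by_cases h : j = i
        · simpa [h] using hu.continuous.continuousOn
        · simp only [if_neg h]; exact continuousOn_const)
      (fun x _ j => by
        by_cases h : j = i
        · simpa [h] using (hu.differentiable (by simp) x).hasFDerivAt
        · simp only [if_neg h]; exact hasFDerivAt_const (0:ℝ) x)
      (by
        rw [sum_divg i u]
        exact ((continuous_pder i hu).continuousOn.integrableOn_compact isCompact_Icc))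
    rw [sum_divg i u] at hdvg
    have hIcc : (∫ x in cube (n+1), pder i u x)
        = ∫ x in Set.Icc (0:Fin (n+1) → ℝ) 1, pder i u x := by
      apply setIntegral_congr_set
      have := Measure.univ_pi_Ico_ae_eq_Icc (α := fun _ : Fin (n+1) => ℝ)
        (μ := fun _ => volume) (f := fun _ => (0:ℝ)) (g := fun _ => 1)
      rw [volume_pi]; exact this
    rw [hIcc, hdvg]
    apply Finset.sum_eq_zero
    intro j _
    by_cases h : j = i
    · subst h
      have key : ∀ y : Fin n → ℝ,
          u (j.insertNth (1:ℝ) y) = u (j.insertNth (0:ℝ) y) := by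
        intro y
        have heq : (fun m : Fin (n+1) => Fin.insertNth (α := fun _ => ℝ) j (0:ℝ) y m
              + ((Pi.single (M := fun _ => ℤ) j (1:ℤ) m : ℤ) : ℝ))
            = Fin.insertNth (α := fun _ => ℝ) j (1:ℝ) y := by
          funext m
          refine Fin.succAboveCases j ?_ ?_ m
          · simp
          · intro m'
            simp [Fin.insertNth_apply_succAbove, Pi.single_eq_of_ne (Fin.succAbove_ne j m')]
        have := hper (j.insertNth (0:ℝ) y) (Pi.single j 1)
        rw [heq] at this
        exact this
      have h1 : ((1 : Fin (n+1) → ℝ) j) = (1:ℝ) := rfl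
      have h0 : ((0 : Fin (n+1) → ℝ) j) = (0:ℝ) := rfl
      simp [h1, h0, key]
    · simp [h]

lemma fract_eq {d : ℕ} (x : Fin d → ℝ) :
    (fun i => (fun i => Int.fract (x i)) i + ((fun i => ⌊x i⌋) i : ℝ)) = x := by
  funext i; exact Int.fract_add_floor (x i)

lemma range_V_subset {d : ℕ} {V : (Fin d → ℝ) → (Fin d → ℝ) → ℝ} (hV : SmoothV V) :
    Set.range (fun q : (Fin d → ℝ) × (Fin d → ℝ) => V q.1 q.2) ⊆
      uncurry V '' (Set.Icc (0:Fin d → ℝ) 1 ×ˢ Set.Icc (0:Fin d → ℝ) 1) := by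
  rintro - ⟨⟨x, y⟩, rfl⟩
  have h1 : V x y = V (fun i => Int.fract (x i)) y := by
    conv_lhs => rw [← fract_eq x]
    exact hV.2.1 y _ _
  have h2 : V (fun i => Int.fract (x i)) y
      = V (fun i => Int.fract (x i)) (fun i => Int.fract (y i)) := by
    conv_lhs => rw [← fract_eq y]
    exact hV.2.2 _ _ _
  refine ⟨(fun i => Int.fract (x i), fun i => Int.fract (y i)), ⟨?_, ?_⟩, ?_⟩
  · exact ⟨fun i => Int.fract_nonneg _, fun i => (Int.fract_lt_one _).le⟩
  · exact ⟨fun i => Int.fract_nonneg _, fun i => (Int.fract_lt_one _).le⟩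
  · show V _ _ = V x y
    rw [← h2, ← h1]

lemma bddV {d : ℕ} {V : (Fin d → ℝ) → (Fin d → ℝ) → ℝ} (hV : SmoothV V) :
    BddAbove (Set.range (fun q : (Fin d → ℝ) × (Fin d → ℝ) => V q.1 q.2)) ∧
    BddBelow (Set.range (fun q : (Fin d → ℝ) × (Fin d → ℝ) => V q.1 q.2)) := by
  have hK : IsCompact ((Set.Icc (0:Fin d → ℝ) 1) ×ˢ (Set.Icc (0:Fin d → ℝ) 1)) :=
    isCompact_Icc.prod isCompact_Icc
  have him := hK.image hV.1.continuous
  exact ⟨him.bddAbove.mono (range_V_subset hV), him.bddBelow.mono (range_V_subset hV)⟩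

lemma V_bounds {d : ℕ} {V : (Fin d → ℝ) → (Fin d → ℝ) → ℝ} (hV : SmoothV V) (x y : Fin d → ℝ) :
    infV V ≤ V x y ∧ V x y ≤ supV V :=
  ⟨ciInf_le (bddV hV).2 (x, y), le_ciSup (bddV hV).1 (x, y)⟩

/- ### Main theorem -/

/-- bounds on `H̄_ε(P) = ln I_ε[u_ε]` and on `∫ |∇u_ε|²` for the minimizer
`u_ε ∈ C^∞(𝕋^d)` with zero mean of the functional `I_ε` over zero-mean `C¹` functions. -/
theorem stmt3 {d : ℕ} (P : Fin d → ℝ) (V : (Fin d → ℝ) → (Fin d → ℝ) → ℝ)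
    (hV : SmoothV V) (ε : ℝ) (hε : 0 < ε)
    (u : (Fin d → ℝ) → ℝ) (hu : ContDiff ℝ (⊤ : ℕ∞) u) (huper : ZPer u)
    (humean : (∫ x in cube d, u x) = 0)
    (hmin : ∀ v : (Fin d → ℝ) → ℝ, ContDiff ℝ 1 v → ZPer v →
      (∫ x in cube d, v x) = 0 → Ieps P V ε u ≤ Ieps P V ε v)
    (H : ℝ) (hH : H = Real.log (Ieps P V ε u)) :
    (infV V ≤ H ∧ H ≤ (∑ i, (P i) ^ 2) / 2 + supV V) ∧
      (∫ x in cube d, ∑ i, (pder i u x) ^ 2) ≤ 2 * (supV V - infV V) := by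
  set Vx : (Fin d → ℝ) → ℝ := fun x => V x (ε⁻¹ • x) with hVx
  have hVxc : Continuous Vx :=
    hV.1.continuous.comp (continuous_id.prodMk (continuous_id.const_smul ε⁻¹))
  set f : (Fin d → ℝ) → ℝ := fun x => (∑ i, (P i + pder i u x) ^ 2) / 2 with hf
  have hfc : Continuous f :=
    (continuous_finset_sum _ fun i _ =>
      (continuous_const.add (continuous_pder i hu)).pow 2).div_const 2
  have hf0 : ∀ x, 0 ≤ f x := fun x =>
    div_nonneg (Finset.sum_nonneg fun i _ => sq_nonneg _) two_pos.le
  have hA : Ieps P V ε u = ∫ x in cube d, Real.exp (f x + Vx x) := rfl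
  set J : ℝ := ∫ x in cube d, f x with hJdef
  set S : ℝ := ∫ x in cube d, ∑ i, (pder i u x) ^ 2 with hSdef
  have hJ0 : 0 ≤ J := setIntegral_nonneg measurableSet_cube fun x _ => hf0 x
  -- integrability of the pieces
  have intc : ∀ c : ℝ, IntegrableOn (fun _ => c) (cube d) :=
    fun c => integrableOn_cube continuous_const
  have hPgc : Continuous fun x => ∑ i, P i * pder i u x :=
    continuous_finset_sum _ fun i _ => continuous_const.mul (continuous_pder i hu)
  have hg2c : Continuous fun x => ∑ i, (pder i u x) ^ 2 :=
    continuous_finset_sum _ fun i _ => (continuous_pder i hu).pow 2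
  have intf : IntegrableOn f (cube d) := integrableOn_cube hfc
  -- ∑ᵢ Pᵢ ∫ ∂ᵢu = 0
  have hPg : (∫ x in cube d, ∑ i, P i * pder i u x) = 0 := by
    rw [integral_finset_sum _ fun i _ =>
      (integrableOn_cube (f := fun x => P i * pder i u x) (continuous_const.mul (continuous_pder i hu)))]
    exact Finset.sum_eq_zero fun i _ => by
      rw [integral_const_mul, integral_pder i hu huper, mul_zero]
  -- J = |P|²/2 + S/2
  have hJ : J = (∑ i, P i ^ 2) / 2 + S / 2 := by
    have hpt : Set.EqOn f (fun x => (∑ i, P i ^ 2) / 2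
        + ((∑ i, P i * pder i u x) + (∑ i, (pder i u x) ^ 2) / 2)) (cube d) := by
      intro x _
      show (∑ i, (P i + pder i u x) ^ 2) / 2 = _
      have h2 : ∑ i, (P i + pder i u x) ^ 2
          = (∑ i, P i ^ 2) + ((∑ i, 2 * (P i * pder i u x)) + ∑ i, (pder i u x) ^ 2) := by
        rw [← Finset.sum_add_distrib, ← Finset.sum_add_distrib]
        exact Finset.sum_congr rfl fun i _ => by ring
      rw [h2, ← Finset.mul_sum]
      ring
    rw [hJdef, setIntegral_congr_fun measurableSet_cube hpt,
      integral_add (intc _) (integrableOn_cube (f := fun x => ∑ i, P i * pder i u x + (∑ i, pder i u x ^ 2) / 2) (hPgc.add (hg2c.div_const 2))),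
      integral_add (integrableOn_cube hPgc) (integrableOn_cube (hg2c.div_const 2)),
      setIntegral_const_cube, hPg, integral_div]
    ring
  -- lower bound : exp (infV + J) ≤ Ieps
  have hlow : Real.exp (infV V + J) ≤ Ieps P V ε u := by
    have hmono : (∫ x in cube d, Real.exp (infV V + J) * ((f x - J) + 1))
        ≤ ∫ x in cube d, Real.exp (f x + Vx x) := by
      apply setIntegral_mono_on
      · exact integrableOn_cube (continuous_const.mul
          ((hfc.sub continuous_const).add continuous_const))
      · exact integrableOn_cube ((hfc.add hVxc).rexp)
      · exact measurableSet_cube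
      · intro x _
        calc Real.exp (infV V + J) * ((f x - J) + 1)
            ≤ Real.exp (infV V + J) * Real.exp (f x - J) :=
              mul_le_mul_of_nonneg_left (Real.add_one_le_exp _) (Real.exp_pos _).le
          _ = Real.exp (infV V + f x) := by rw [← Real.exp_add]; congr 1; ring
          _ ≤ Real.exp (f x + Vx x) := by
              apply Real.exp_le_exp.2
              have := (V_bounds hV x (ε⁻¹ • x)).1
              simp only [hVx]
              linarith
    have hval : (∫ x in cube d, Real.exp (infV V + J) * ((f x - J) + 1))
        = Real.exp (infV V + J) := by
      rw [integral_const_mul]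
      have : (∫ x in cube d, ((f x - J) + 1)) = 1 := by
        have i1 : IntegrableOn (fun x => f x - J) (cube d) :=
          integrableOn_cube (hfc.sub continuous_const)
        rw [integral_add i1 (intc 1), integral_sub intf (intc J),
          setIntegral_const_cube, setIntegral_const_cube]
        simp [hJdef]
      rw [this, mul_one]
    rw [hA]
    linarith [hval ▸ hmono]
  -- upper bound : Ieps ≤ exp (|P|²/2 + supV)
  have hup : Ieps P V ε u ≤ Real.exp ((∑ i, P i ^ 2) / 2 + supV V) := by
    have h0 := hmin (fun _ => 0) contDiff_const (fun x k => rfl) (by simp)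
    have hI0 : Ieps P V ε (fun _ => 0)
        = ∫ x in cube d, Real.exp ((∑ i, P i ^ 2) / 2 + Vx x) := by
      simp [Ieps, pder, hVx]
    have hle : (∫ x in cube d, Real.exp ((∑ i, P i ^ 2) / 2 + Vx x))
        ≤ ∫ x in cube d, Real.exp ((∑ i, P i ^ 2) / 2 + supV V) := by
      apply setIntegral_mono_on
      · exact integrableOn_cube ((continuous_const.add hVxc).rexp)
      · exact intc _
      · exact measurableSet_cube
      · intro x _
        apply Real.exp_le_exp.2
        have := (V_bounds hV x (ε⁻¹ • x)).2
        simp only [hVx]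
        linarith
    calc Ieps P V ε u ≤ Ieps P V ε (fun _ => 0) := h0
      _ = _ := hI0
      _ ≤ ∫ x in cube d, Real.exp ((∑ i, P i ^ 2) / 2 + supV V) := hle
      _ = Real.exp ((∑ i, P i ^ 2) / 2 + supV V) := setIntegral_const_cube _
  have hApos : 0 < Ieps P V ε u := lt_of_lt_of_le (Real.exp_pos _) hlow
  have hloglow : infV V + J ≤ H := by
    rw [hH]
    exact (Real.le_log_iff_exp_le hApos).2 hlow
  have hlogup : H ≤ (∑ i, P i ^ 2) / 2 + supV V := by
    rw [hH]
    exact (Real.log_le_iff_le_exp hApos).2 hup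
  refine ⟨⟨by linarith, hlogup⟩, ?_⟩
  show S ≤ 2 * (supV V - infV V)
  linarith [hloglow, hlogup, hJ]
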